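/- arXiv:2402.07534 — 4 statements merged into one kernel-verified Lean document; each statement's English description precedes it below -/
import Mathlib

section
/- Let α, β ∈ ℤ² \ {(0,0)} with α + β ≠ 0 and α − β ≠ 0, and let θ, η ∈ ℝ. Set u(x) = cos(α·x+θ) α^⊥ and v(x) = cos(β·x+η) β^⊥ on ℝ². Then there exists a smooth (2πℤ)²-periodic function p : ℝ² → ℝ such that (u·∇)v + (v·∇)u = ∇p + ½ sin((α+β)·x+θ+η) (β^⊥·α) ((|β|²−|α|²)/|α+β|²) (α+β)^⊥ − ½ sin((α−β)·x+θ−η) (α^⊥·β) ((|β|²−|α|²)/|α−β|²) (α−β)^⊥. -/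
open Real

noncomputable section

/-- Partial derivative `∂_i f` of a scalar function on `ℝ^d`. -/
def pd (d : ℕ) (i : Fin d) (f : (Fin d → ℝ) → ℝ) (x : Fin d → ℝ) : ℝ :=
  fderiv ℝ f x (Pi.single i 1)

/-- `(u · ∇) v`, the `j`-th component: `Σ_i u_i ∂_i v_j`. -/
def conv (d : ℕ) (u v : (Fin d → ℝ) → (Fin d → ℝ)) (x : Fin d → ℝ) (j : Fin d) : ℝ :=
  ∑ i, u x i * pd d i (fun y => v y j) x

/-- `(2πℤ)^d`-periodicity. -/
def PerF {α : Type*} (d : ℕ) (f : (Fin d → ℝ) → α) : Prop :=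
  ∀ (x : Fin d → ℝ) (k : Fin d → ℤ), f (x + fun i => 2 * π * (k i : ℝ)) = f x

/-- `k^⊥ = (-k₂, k₁)` for `k ∈ ℝ²`. -/
def perp (k : Fin 2 → ℝ) : Fin 2 → ℝ := ![-(k 1), k 0]

/-- Dot product on `ℝ²`. -/
def dot (a b : Fin 2 → ℝ) : ℝ := a 0 * b 0 + a 1 * b 1

/-- Squared Euclidean norm on `ℝ²`. -/
def nsq (a : Fin 2 → ℝ) : ℝ := a 0 ^ 2 + a 1 ^ 2

/-! ### Auxiliary lemmas -/

private def Dc (k : Fin 2 → ℝ) : (Fin 2 → ℝ) →L[ℝ] ℝ :=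
  k 0 • ContinuousLinearMap.proj 0 + k 1 • ContinuousLinearMap.proj 1

private lemma Dc_eq (k : Fin 2 → ℝ) : (fun y => dot k y) = ⇑(Dc k) := by
  funext y; simp [Dc, dot, mul_comm]

private lemma Dc_single (k : Fin 2 → ℝ) (i : Fin 2) : Dc k (Pi.single i 1) = k i := by
  fin_cases i <;> simp [Dc, Pi.single_apply]

private lemma hasFDerivAt_mode (c : ℝ) (k : Fin 2 → ℝ) (φ : ℝ) (x : Fin 2 → ℝ) :
    HasFDerivAt (fun y => c * Real.cos (dot k y + φ))
      (-((c * Real.sin (dot k x + φ)) • Dc k)) x := by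
  have h : HasFDerivAt (fun y => dot k y) (Dc k) x := by
    rw [Dc_eq]; exact (Dc k).hasFDerivAt
  have h2 := ((h.add_const φ).cos).const_mul c
  simpa [smul_smul, mul_comm, mul_assoc, neg_smul] using h2

private lemma pd_mode (c : ℝ) (k : Fin 2 → ℝ) (φ : ℝ) (i : Fin 2) (x : Fin 2 → ℝ) :
    pd 2 i (fun y => c * Real.cos (dot k y + φ)) x
      = c * -Real.sin (dot k x + φ) * k i := by
  unfold pd
  rw [(hasFDerivAt_mode c k φ x).fderiv]
  simp [Dc_single, Pi.single_apply]

private lemma pd_mode2 (c₁ c₂ : ℝ) (k₁ k₂ : Fin 2 → ℝ) (φ₁ φ₂ : ℝ) (i : Fin 2) (x : Fin 2 → ℝ) :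
    pd 2 i (fun y => c₁ * Real.cos (dot k₁ y + φ₁) + c₂ * Real.cos (dot k₂ y + φ₂)) x
      = c₁ * -Real.sin (dot k₁ x + φ₁) * k₁ i + c₂ * -Real.sin (dot k₂ x + φ₂) * k₂ i := by
  unfold pd
  rw [(show HasFDerivAt (fun y => c₁ * Real.cos (dot k₁ y + φ₁) + c₂ * Real.cos (dot k₂ y + φ₂)) _ x from
    (hasFDerivAt_mode c₁ k₁ φ₁ x).add (hasFDerivAt_mode c₂ k₂ φ₂ x)).fderiv]
  simp [Dc_single]

private lemma contDiff_mode (c : ℝ) (k : Fin 2 → ℝ) (φ : ℝ) :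
    ContDiff ℝ (⊤ : ℕ∞) (fun x : Fin 2 → ℝ => c * Real.cos (dot k x + φ)) := by
  have h : ContDiff ℝ (⊤ : ℕ∞) (fun y : Fin 2 → ℝ => dot k y + φ) := by
    have := (Dc k).contDiff (n := (⊤ : ℕ∞))
    rw [← Dc_eq] at this
    exact this.add contDiff_const
  exact contDiff_const.mul (Real.contDiff_cos.comp h)

private lemma nsq_int_ne (k : Fin 2 → ℤ) (hk : k ≠ 0) :
    ((k 0 : ℝ)) ^ 2 + ((k 1 : ℝ)) ^ 2 ≠ 0 := by
  intro H
  have h0 : (k 0 : ℝ) = 0 := by nlinarith [sq_nonneg ((k 0 : ℝ)), sq_nonneg ((k 1 : ℝ))]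
  have h1 : (k 1 : ℝ) = 0 := by nlinarith [sq_nonneg ((k 0 : ℝ)), sq_nonneg ((k 1 : ℝ))]
  apply hk
  funext i
  fin_cases i
  · exact_mod_cast h0
  · exact_mod_cast h1

private lemma per_mode (c : ℝ) (k : Fin 2 → ℤ) (φ : ℝ) (x : Fin 2 → ℝ) (m : Fin 2 → ℤ) :
    c * Real.cos (dot (fun i => (k i : ℝ)) (x + fun i => 2 * π * (m i : ℝ)) + φ)
      = c * Real.cos (dot (fun i => (k i : ℝ)) x + φ) := by
  congr 1
  have harg : dot (fun i => (k i : ℝ)) (x + fun i => 2 * π * (m i : ℝ)) + φ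
      = (dot (fun i => (k i : ℝ)) x + φ) + ((k 0 * m 0 + k 1 * m 1 : ℤ) : ℝ) * (2 * π) := by
    simp [dot]
    push_cast
    ring
  rw [harg, Real.cos_add_int_mul_two_pi]

set_option maxHeartbeats 2000000 in
theorem symmetrized_interaction_of_two_modes
    (α β : Fin 2 → ℤ) (hα : α ≠ 0) (hβ : β ≠ 0)
    (hsum : α + β ≠ 0) (hdiff : α - β ≠ 0) (θ η : ℝ)
    (αr βr : Fin 2 → ℝ) (hαr : αr = fun i => (α i : ℝ)) (hβr : βr = fun i => (β i : ℝ))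
    (u v : (Fin 2 → ℝ) → (Fin 2 → ℝ))
    (hu : u = fun x => fun j => cos (dot αr x + θ) * perp αr j)
    (hv : v = fun x => fun j => cos (dot βr x + η) * perp βr j) :
    ∃ p : (Fin 2 → ℝ) → ℝ, ContDiff ℝ (⊤ : ℕ∞) p ∧ PerF 2 p ∧
      ∀ x j, conv 2 u v x j + conv 2 v u x j
        = pd 2 j p x
          + 1 / 2 * sin (dot (αr + βr) x + (θ + η)) * dot (perp βr) αr
            * ((nsq βr - nsq αr) / nsq (αr + βr)) * perp (αr + βr) j
          - 1 / 2 * sin (dot (αr - βr) x + (θ - η)) * dot (perp αr) βr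
            * ((nsq βr - nsq αr) / nsq (αr - βr)) * perp (αr - βr) j := by
  refine ⟨fun x => (-(dot (perp βr) αr ^ 2) / nsq (αr + βr)) * cos (dot (αr + βr) x + (θ + η))
      + (dot (perp βr) αr ^ 2 / nsq (αr - βr)) * cos (dot (αr - βr) x + (θ - η)), ?_, ?_, ?_⟩
  · exact (contDiff_mode _ _ _).add (contDiff_mode _ _ _)
  · intro x m
    have h1 : (αr + βr) = fun i => (((α + β) i : ℤ) : ℝ) := by
      funext i; simp [hαr, hβr]
    have h2 : (αr - βr) = fun i => (((α - β) i : ℤ) : ℝ) := by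
      funext i; simp [hαr, hβr]
    simp only [h1, h2, per_mode]
  · intro x j
    have hns : nsq (αr + βr) ≠ 0 := by
      have h := nsq_int_ne (α + β) hsum
      simp only [Pi.add_apply] at h
      push_cast at h
      simpa [nsq, hαr, hβr] using h
    have hnd : nsq (αr - βr) ≠ 0 := by
      have h := nsq_int_ne (α - β) hdiff
      simp only [Pi.sub_apply] at h
      push_cast at h
      simpa [nsq, hαr, hβr] using h
    have hns' : (αr 0 + βr 0) ^ 2 + (αr 1 + βr 1) ^ 2 ≠ 0 := by
      simpa [nsq] using hns
    have hnd' : (αr 0 - βr 0) ^ 2 + (αr 1 - βr 1) ^ 2 ≠ 0 := by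
      simpa [nsq] using hnd
    subst hu hv
    simp only [conv, Fin.sum_univ_two]
    rw [show (fun y => cos (dot βr y + η) * perp βr j)
          = (fun y => perp βr j * cos (dot βr y + η)) from funext fun y => mul_comm _ _,
        show (fun y => cos (dot αr y + θ) * perp αr j)
          = (fun y => perp αr j * cos (dot αr y + θ)) from funext fun y => mul_comm _ _]
    simp only [pd_mode, pd_mode2]
    have e1 : dot (αr + βr) x + (θ + η) = (dot αr x + θ) + (dot βr x + η) := by
      simp [dot]; ring
    have e2 : dot (αr - βr) x + (θ - η) = (dot αr x + θ) - (dot βr x + η) := by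
      simp [dot]; ring
    rw [e1, e2, Real.sin_add (dot αr x + θ) (dot βr x + η),
      Real.sin_sub (dot αr x + θ) (dot βr x + η)]
    have hj : j = 0 ∨ j = 1 := by
      rcases j with ⟨jv, hjv⟩
      interval_cases jv
      · exact Or.inl rfl
      · exact Or.inr rfl
    rcases hj with rfl | rfl
    · simp only [perp, dot, nsq, Pi.add_apply, Pi.sub_apply, Matrix.cons_val_zero,
        Matrix.cons_val_one, Matrix.head_cons]
      field_simp
      ring
    · simp only [perp, dot, nsq, Pi.add_apply, Pi.sub_apply, Matrix.cons_val_zero,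
        Matrix.cons_val_one, Matrix.head_cons]
      field_simp
      ring
end
end

section
/- Let ρ, θ, η ∈ ℝ and k, ω ∈ ℝ² with k·ω = 0. Set v(x) = ρ cos(k·x+θ) k^⊥ and w(x) = ρ cos((k+ω)·x+η) (k+ω)^⊥ on ℝ². Then (v·∇)w = −½ ρ² (k^⊥·ω) [ sin((2k+ω)·x+θ+η) + sin(ω·x+η−θ) ] (k+ω)^⊥ and (w·∇)v = ½ ρ² (k^⊥·ω) [ sin((2k+ω)·x+θ+η) − sin(ω·x+η−θ) ] k^⊥. -/
open Real

noncomputable section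

lemma pd_cos (ρ c m : ℝ) (a : Fin 2 → ℝ) (i : Fin 2) (x : Fin 2 → ℝ) :
    pd 2 i (fun y => ρ * cos (dot a y + c) * m) x
      = ρ * (-sin (dot a x + c)) * m * a i := by
  have hdot : HasFDerivAt (fun y : Fin 2 → ℝ => dot a y)
      ((a 0) • (ContinuousLinearMap.proj 0 : (Fin 2 → ℝ) →L[ℝ] ℝ)
        + (a 1) • (ContinuousLinearMap.proj 1 : (Fin 2 → ℝ) →L[ℝ] ℝ)) x := by
    have h0 := ((ContinuousLinearMap.proj 0 : (Fin 2 → ℝ) →L[ℝ] ℝ).hasFDerivAt (x := x)).const_mul (a 0)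
    have h1 := ((ContinuousLinearMap.proj 1 : (Fin 2 → ℝ) →L[ℝ] ℝ).hasFDerivAt (x := x)).const_mul (a 1)
    simpa [dot, Pi.add_def] using h0.add h1
  have hcos := (Real.hasDerivAt_cos (dot a x + c)).comp_hasFDerivAt x (hdot.add_const c)
  have hf := (hcos.const_mul ρ).mul_const m
  have hfd := hf.fderiv
  simp only [Function.comp] at hfd
  have : pd 2 i (fun y => ρ * cos (dot a y + c) * m) x
      = (m • ρ • (-sin (dot a x + c)) •
          ((a 0) • (ContinuousLinearMap.proj 0 : (Fin 2 → ℝ) →L[ℝ] ℝ)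
            + (a 1) • (ContinuousLinearMap.proj 1 : (Fin 2 → ℝ) →L[ℝ] ℝ)))
          (Pi.single i 1) := by
    rw [pd, hfd]
  rw [this]
  fin_cases i <;>
    simp [ContinuousLinearMap.smulRight_apply, Pi.single] <;> ring

theorem resonant_pair_interaction
    (ρ θ η : ℝ) (k ω : Fin 2 → ℝ) (hkω : dot k ω = 0)
    (v w : (Fin 2 → ℝ) → (Fin 2 → ℝ))
    (hv : v = fun x => fun j => ρ * cos (dot k x + θ) * perp k j)
    (hw : w = fun x => fun j => ρ * cos (dot (k + ω) x + η) * perp (k + ω) j) :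
    (∀ x j, conv 2 v w x j
      = -(1 / 2) * ρ ^ 2 * dot (perp k) ω
        * (sin (dot (2 • k + ω) x + (θ + η)) + sin (dot ω x + (η - θ))) * perp (k + ω) j) ∧
    (∀ x j, conv 2 w v x j
      = 1 / 2 * ρ ^ 2 * dot (perp k) ω
        * (sin (dot (2 • k + ω) x + (θ + η)) - sin (dot ω x + (η - θ))) * perp k j) := by
  subst hv hw
  have key : ∀ x : Fin 2 → ℝ,
      dot (2 • k + ω) x + (θ + η)
        = (dot k x + θ) + (dot (k + ω) x + η) ∧
      dot ω x + (η - θ) = (dot (k + ω) x + η) - (dot k x + θ) := by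
    intro x
    constructor <;> (simp only [dot, Pi.add_apply, Pi.smul_apply, smul_eq_mul]; ring)
  constructor <;> intro x j <;>
    rw [(key x).1, (key x).2, Real.sin_add, Real.sin_sub] <;>
    simp only [conv, Fin.sum_univ_two, pd_cos, Pi.add_apply] <;>
    fin_cases j <;> simp [perp, dot] <;> ring
end
end

section
/- Let N > 1 be a real number and let a : ℤ² → [0,∞) satisfy a_{(0,0)} = 0 and Σ_{k∈ℤ²} a_k² < ∞. Then the sum Σ over pairs (k₁,k₂) ∈ ℤ²×ℤ² with k₁+k₂ ≠ 0 and k₁−k₂ ≠ 0 of a_{k₁} a_{k₂} ( |k₁+k₂|^{−N−1} + |k₁−k₂|^{−N−1} ) is finite. -/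
open Real

noncomputable section

/-- Euclidean norm of a point of `ℤ²`. -/
def znorm (k : ℤ × ℤ) : ℝ := Real.sqrt ((k.1 : ℝ) ^ 2 + (k.2 : ℝ) ^ 2)

/-!
By AM–GM, `a k₁ * a k₂ ≤ (a k₁ ^ 2 + a k₂ ^ 2) / 2`. After the change of variables
`(k₁, k₂) ↦ (k₁, k₁ ± k₂)` (or `(k₂, k₁ ± k₂)`), which is a bijection of `ℤ² × ℤ²`, each of the
resulting four sums is the product `(∑ₖ a k ^ 2) * (∑ₘ |m| ^ (-N - 1))`, and the lattice sum
converges because `N + 1 > 2` (for the sup norm this is the Eisenstein series estimate).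
-/

open Function

section Bilinear

variable {ι κ : Type*} {a : ι → ℝ} {g : κ → ℝ}

theorem summable_mul_mul_comp_of_injective (ha : Summable fun i => a i ^ 2) (hg : Summable g)
    (hg0 : ∀ k, 0 ≤ g k) {φ : ι × ι → κ} (h₁ : Injective fun p => (p.1, φ p))
    (h₂ : Injective fun p => (p.2, φ p)) :
    Summable fun p : ι × ι => a p.1 * a p.2 * g (φ p) := by
  have hprod : Summable fun q : ι × κ => a q.1 ^ 2 * g q.2 :=
    ha.mul_of_nonneg hg (fun _ => sq_nonneg _) hg0
  refine .of_norm_bounded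
    (((hprod.comp_injective h₁).add (hprod.comp_injective h₂)).div_const 2) fun p => ?_
  have amgm : |a p.1| * |a p.2| ≤ (a p.1 ^ 2 + a p.2 ^ 2) / 2 := by
    nlinarith [two_mul_le_add_sq |a p.1| |a p.2|, sq_abs (a p.1), sq_abs (a p.2)]
  simp only [comp_apply, norm_mul, norm_eq_abs, abs_of_nonneg (hg0 _)]
  nlinarith [mul_le_mul_of_nonneg_right amgm (hg0 (φ p))]

variable {G : Type*} [AddCommGroup G] {a : G → ℝ} {g : G → ℝ}

theorem summable_mul_mul_comp_add (ha : Summable fun i => a i ^ 2) (hg : Summable g)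
    (hg0 : ∀ k, 0 ≤ g k) : Summable fun p : G × G => a p.1 * a p.2 * g (p.1 + p.2) :=
  summable_mul_mul_comp_of_injective ha hg hg0
    (fun _ _ h => by grind [Prod.ext_iff]) (fun _ _ h => by grind [Prod.ext_iff])

theorem summable_mul_mul_comp_sub (ha : Summable fun i => a i ^ 2) (hg : Summable g)
    (hg0 : ∀ k, 0 ≤ g k) : Summable fun p : G × G => a p.1 * a p.2 * g (p.1 - p.2) :=
  summable_mul_mul_comp_of_injective ha hg hg0
    (fun _ _ h => by grind [Prod.ext_iff]) (fun _ _ h => by grind [Prod.ext_iff])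

end Bilinear

theorem norm_finTwoArrowEquiv_symm {E : Type*} [SeminormedAddGroup E] (x : E × E) :
    ‖(finTwoArrowEquiv E).symm x‖ = ‖x‖ := by
  simp [Pi.norm_def, Prod.norm_def, Fin.univ_succ, NNReal.coe_max]

theorem Int.summable_prod_norm_rpow_neg {s : ℝ} (hs : 2 < s) :
    Summable fun x : ℤ × ℤ => ‖x‖ ^ (-s) := by
  simpa only [norm_finTwoArrowEquiv_symm, comp_def] using
    (finTwoArrowEquiv ℤ).symm.summable_iff.mpr (EisensteinSeries.summable_one_div_norm_rpow hs)

theorem norm_le_znorm (x : ℤ × ℤ) : ‖x‖ ≤ znorm x := by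
  rw [Prod.norm_def, Int.norm_eq_abs, Int.norm_eq_abs, max_le_iff, znorm]
  constructor <;> apply Real.abs_le_sqrt <;> nlinarith [sq_nonneg (x.1 : ℝ), sq_nonneg (x.2 : ℝ)]

theorem summable_znorm_rpow_neg {s : ℝ} (hs : 2 < s) : Summable fun x => znorm x ^ (-s) := by
  refine (Int.summable_prod_norm_rpow_neg hs).of_nonneg_of_le
    (fun x => rpow_nonneg (sqrt_nonneg _) _) fun x => ?_
  rcases eq_or_ne x 0 with rfl | hx
  · simp [znorm, zero_rpow (by linarith : -s ≠ 0)]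
  · exact rpow_le_rpow_of_nonpos (norm_pos_iff.mpr hx) (norm_le_znorm x) (by linarith)

theorem square_summable_interactions_general
    (N : ℝ) (hN : 1 < N) (a : ℤ × ℤ → ℝ)
    (ha_sq : Summable fun k => a k ^ 2) :
    Summable fun p : (ℤ × ℤ) × (ℤ × ℤ) =>
      if p.1 + p.2 ≠ 0 ∧ p.1 - p.2 ≠ 0 then
        a p.1 * a p.2 * (znorm (p.1 + p.2) ^ (-N - 1) + znorm (p.1 - p.2) ^ (-N - 1))
      else 0 := by
  have hker : Summable fun m => znorm m ^ (-N - 1) := by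
    simpa only [neg_add'] using summable_znorm_rpow_neg (s := N + 1) (by linarith)
  have hker0 (m : ℤ × ℤ) : 0 ≤ znorm m ^ (-N - 1) := rpow_nonneg (sqrt_nonneg _) _
  have hsum := (summable_mul_mul_comp_add ha_sq hker hker0).add
    (summable_mul_mul_comp_sub ha_sq hker hker0)
  refine .of_norm_bounded hsum.abs fun p => ?_
  split_ifs
  · rw [norm_eq_abs, mul_add]
  · simp

theorem square_summable_interactions
    (N : ℝ) (hN : 1 < N) (a : ℤ × ℤ → ℝ)
    (ha_nonneg : ∀ k, 0 ≤ a k) (ha0 : a (0, 0) = 0)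
    (ha_sq : Summable fun k => a k ^ 2) :
    Summable fun p : (ℤ × ℤ) × (ℤ × ℤ) =>
      if p.1 + p.2 ≠ 0 ∧ p.1 - p.2 ≠ 0 then
        a p.1 * a p.2 * (znorm (p.1 + p.2) ^ (-N - 1) + znorm (p.1 - p.2) ^ (-N - 1))
      else 0 :=
  square_summable_interactions_general N hN a ha_sq
end
end

section
/- Let (k_j)_{j≥0} be a sequence in ℤ² \ {(0,0)} with |k_{j+1}| > 8|k_j| for all j, let (ρ_j)_{j≥0} be nonnegative reals, and let N ≥ 0 be a real number such that Σ_{j≥0} ρ_j² |k_j|^{−2N} < ∞. Then Σ_{j≥1} Σ_{0≤p<j} ρ_j ρ_p |k_j| |k_p| (|k_j|+|k_p|)^{−2N−2} < ∞. -/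
open Real

noncomputable section

lemma znorm_pos {k : ℤ × ℤ} (hk : k ≠ 0) : 0 < znorm k := by
  have h : k.1 ≠ 0 ∨ k.2 ≠ 0 := by
    by_contra h
    push_neg at h
    exact hk (Prod.ext h.1 h.2)
  apply Real.sqrt_pos.mpr
  rcases h with h | h
  · have : (k.1 : ℝ) ≠ 0 := Int.cast_ne_zero.mpr h
    positivity
  · have : (k.2 : ℝ) ≠ 0 := Int.cast_ne_zero.mpr h
    positivity

/-- The pointwise interaction estimate. -/
lemma interaction_bound {A B t x y N : ℝ} (hA : 0 < A) (hB : 0 < B)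
    (hx : 0 ≤ x) (hy : 0 ≤ y) (hN : 0 ≤ N) (ht : 0 ≤ t)
    (hBA : B ≤ A) (hBt : B ≤ t * A) :
    x * y * A * B * (A + B) ^ (-2 * N - 2)
      ≤ (x ^ 2 * A ^ (-2 * N) + y ^ 2 * B ^ (-2 * N)) * t := by
  have h1 : (A + B) ^ (-2 * N - 2) ≤ A ^ (-2 * N - 2) :=
    Real.rpow_le_rpow_of_nonpos hA (by linarith) (by linarith)
  have h2 : A ^ (-2 * N - 2) = A ^ (-2 * N) * (A ^ 2)⁻¹ := by
    rw [show (-2 * N - 2 : ℝ) = (-2 * N) + (-2) by ring, Real.rpow_add hA,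
      Real.rpow_neg hA.le]
    congr 1
    rw [show ((2:ℝ)) = ((2:ℕ):ℝ) by norm_num, Real.rpow_natCast]
  have h3 : A ^ (-2 * N) ≤ B ^ (-2 * N) :=
    Real.rpow_le_rpow_of_nonpos hB hBA (by linarith)
  have hu : 0 ≤ A ^ (-2 * N) := Real.rpow_nonneg hA.le _
  have hv : 0 ≤ B ^ (-2 * N) := Real.rpow_nonneg hB.le _
  have hBAt : B / A ≤ t := (div_le_iff₀ hA).2 (by linarith)
  have hterm : x * y * A ^ (-2 * N) ≤ x ^ 2 * A ^ (-2 * N) + y ^ 2 * B ^ (-2 * N) := by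
    nlinarith [mul_le_mul_of_nonneg_left h3 (sq_nonneg y), mul_nonneg (sq_nonneg (x - y)) hu,
      mul_nonneg (sq_nonneg x) hu, mul_nonneg (sq_nonneg y) hu]
  calc x * y * A * B * (A + B) ^ (-2 * N - 2)
      ≤ x * y * A * B * (A ^ (-2 * N) * (A ^ 2)⁻¹) := by
        rw [← h2]
        exact mul_le_mul_of_nonneg_left h1 (by positivity)
    _ = (x * y) * (B / A) * A ^ (-2 * N) := by
        field_simp
    _ ≤ (x * y) * t * A ^ (-2 * N) := by
        apply mul_le_mul_of_nonneg_right _ hu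
        exact mul_le_mul_of_nonneg_left hBAt (by positivity)
    _ = (x * y * A ^ (-2 * N)) * t := by ring
    _ ≤ (x ^ 2 * A ^ (-2 * N) + y ^ 2 * B ^ (-2 * N)) * t :=
        mul_le_mul_of_nonneg_right hterm ht

set_option maxHeartbeats 1000000 in
theorem lacunary_interactions_summable
    (k : ℕ → ℤ × ℤ) (hk : ∀ j, k j ≠ 0)
    (hlac : ∀ j, 8 * znorm (k j) < znorm (k (j + 1)))
    (ρ : ℕ → ℝ) (hρ : ∀ j, 0 ≤ ρ j) (N : ℝ) (hN : 0 ≤ N)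
    (hsum : Summable fun j => ρ j ^ 2 * znorm (k j) ^ (-2 * N)) :
    Summable fun q : ℕ × ℕ =>
      if q.2 < q.1 then
        ρ q.1 * ρ q.2 * znorm (k q.1) * znorm (k q.2)
          * (znorm (k q.1) + znorm (k q.2)) ^ (-2 * N - 2)
      else 0 := by
  obtain ⟨a, ha⟩ : ∃ a : ℕ → ℝ, a = fun j => ρ j ^ 2 * znorm (k j) ^ (-2 * N) := ⟨_, rfl⟩
  rw [← ha] at hsum
  have hz : ∀ j, 0 < znorm (k j) := fun j => znorm_pos (hk j)
  have hann : ∀ j, 0 ≤ a j := fun j => by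
    rw [ha]
    have := (hz j).le
    positivity
  have hgrow : ∀ p d : ℕ, znorm (k p) * 8 ^ d ≤ znorm (k (p + d)) := by
    intro p d
    induction d with
    | zero => simp
    | succ d ih =>
      have h2 := hlac (p + d)
      calc znorm (k p) * 8 ^ (d + 1) = (znorm (k p) * 8 ^ d) * 8 := by ring
        _ ≤ znorm (k (p + d)) * 8 := by nlinarith
        _ ≤ znorm (k (p + d + 1)) := by nlinarith
  obtain ⟨r, hr⟩ : ∃ r : ℝ, r = 8⁻¹ := ⟨_, rfl⟩
  have hr0 : (0:ℝ) ≤ r := by norm_num [hr]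
  have hr1 : r < 1 := by norm_num [hr]
  have hgeo : Summable fun n : ℕ => r ^ n := summable_geometric_of_lt_one hr0 hr1
  have hpow : ∀ p j : ℕ, p ≤ j → r ^ (j - p) = r ^ j * 8 ^ p := by
    intro p j hpj
    have h8 : ((8:ℝ)) ^ (j - p) * 8 ^ p = 8 ^ j := by
      rw [← pow_add]; congr 1; omega
    have hrp : r ^ (j - p) = ((8:ℝ) ^ (j - p))⁻¹ := by rw [hr, inv_pow]
    have hrj : r ^ j = ((8:ℝ) ^ j)⁻¹ := by rw [hr, inv_pow]
    rw [hrp, hrj]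
    field_simp
    linarith [h8]
  -- first piece
  have hf1 : Summable fun q : ℕ × ℕ => if q.2 < q.1 then a q.1 * r ^ (q.1 - q.2) else 0 := by
    rw [summable_prod_of_nonneg (by
      intro q; dsimp only; split
      · exact mul_nonneg (hann _) (by positivity)
      · exact le_refl 0)]
    constructor
    · intro j
      apply summable_of_ne_finset_zero (s := Finset.range j)
      intro p hp
      rw [Finset.mem_range] at hp
      exact if_neg (by omega)
    · apply Summable.of_nonneg_of_le (fun j => tsum_nonneg (fun p => by
        dsimp only; split
        · exact mul_nonneg (hann _) (by positivity)
        · exact le_refl 0)) _ hsum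
      intro j
      have heq : (∑' p : ℕ, if p < j then a j * r ^ (j - p) else 0)
          = ∑ p ∈ Finset.range j, a j * r ^ (j - p) := by
        rw [tsum_eq_sum (s := Finset.range j) (fun p hp => if_neg (by
          rw [Finset.mem_range] at hp; omega))]
        exact Finset.sum_congr rfl fun p hp => if_pos (Finset.mem_range.mp hp)
      rw [heq]
      have hsumgeo : ∑ p ∈ Finset.range j, a j * r ^ (j - p)
          = a j * r ^ j * ∑ p ∈ Finset.range j, (8:ℝ) ^ p := by
        rw [Finset.mul_sum]
        refine Finset.sum_congr rfl fun p hp => ?_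
        rw [hpow p j (Finset.mem_range.mp hp).le]
        ring
      rw [hsumgeo]
      have hgs : ∑ p ∈ Finset.range j, (8:ℝ) ^ p = ((8:ℝ) ^ j - 1) / (8 - 1) :=
        geom_sum_eq (by norm_num) j
      rw [hgs]
      have hone : r ^ j * (8:ℝ) ^ j = 1 := by
        rw [hr, ← mul_pow]; norm_num
      have hrpos : (0:ℝ) < r ^ j := by rw [hr]; positivity
      have hexp : a j * r ^ j * (((8:ℝ) ^ j - 1) / (8 - 1))
          = (a j * (r ^ j * 8 ^ j) - a j * r ^ j) / 7 := by ring
      rw [hexp, hone, mul_one]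
      linarith [mul_nonneg (hann j) hrpos.le, hann j]
  -- second piece, in swapped coordinates
  have hswapped : Summable fun x : ℕ × ℕ => if x.1 < x.2 then a x.1 * r ^ (x.2 - x.1) else 0 := by
    rw [summable_prod_of_nonneg (by
      intro q; dsimp only; split
      · exact mul_nonneg (hann _) (by positivity)
      · exact le_refl 0)]
    constructor
    · intro p
      apply Summable.of_nonneg_of_le (f := fun j => (a p * 8 ^ p) * r ^ j)
        (fun j => by
          dsimp only; split
          · exact mul_nonneg (hann _) (by positivity)
          · exact le_refl 0)
        (fun j => ?_) (hgeo.mul_left _)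
      dsimp only
      split
      · next h =>
        rw [hpow p j (le_of_lt h)]
        exact le_of_eq (by ring)
      · exact mul_nonneg (mul_nonneg (hann p) (by positivity)) (by positivity)
    · apply Summable.of_nonneg_of_le (fun p => tsum_nonneg (fun j => by
        dsimp only; split
        · exact mul_nonneg (hann _) (by positivity)
        · exact le_refl 0)) _ hsum
      intro p
      have hinj : Function.Injective (fun d : ℕ => d + (p + 1)) :=
        fun x y h => by simpa using h
      have hvan : Function.support (fun j : ℕ => if p < j then a p * r ^ (j - p) else 0)
          ⊆ Set.range (fun d : ℕ => d + (p + 1)) := by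
        intro x hx
        rcases lt_or_ge x (p + 1) with hc | hc
        · exfalso
          apply hx
          exact if_neg (by omega)
        · exact ⟨x - (p + 1), by show x - (p + 1) + (p + 1) = x; omega⟩
      have hshift := hinj.tsum_eq
        (f := fun j : ℕ => if p < j then a p * r ^ (j - p) else 0) hvan
      rw [← hshift]
      have heq2 : (∑' d : ℕ, (fun j : ℕ => if p < j then a p * r ^ (j - p) else 0) (d + (p + 1)))
          = ∑' d : ℕ, (a p * r) * r ^ d := by
        refine tsum_congr fun d => ?_
        simp only
        rw [if_pos (by omega)]
        have hd1 : d + (p + 1) - p = d + 1 := by omega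
        rw [hd1, pow_succ]
        ring
      rw [heq2, tsum_mul_left, tsum_geometric_of_lt_one hr0 hr1]
      have h7 : r * (1 - r)⁻¹ = 7⁻¹ := by rw [hr]; norm_num
      calc a p * r * (1 - r)⁻¹ = a p * (r * (1 - r)⁻¹) := by ring
        _ = a p * 7⁻¹ := by rw [h7]
        _ ≤ a p := by linarith [hann p]
  have hf2 : Summable fun q : ℕ × ℕ => if q.2 < q.1 then a q.2 * r ^ (q.1 - q.2) else 0 :=
    (Equiv.prodComm ℕ ℕ).summable_iff.mpr hswapped
  -- combine
  apply Summable.of_nonneg_of_le _ _ (hf1.add hf2)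
  · intro q
    split
    · have h1 := (hz q.1).le
      have h2 := (hz q.2).le
      have h4 : (0:ℝ) ≤ (znorm (k q.1) + znorm (k q.2)) ^ (-2 * N - 2) :=
        Real.rpow_nonneg (by positivity) _
      have h5 := hρ q.1
      have h6 := hρ q.2
      positivity
    · exact le_refl 0
  · rintro ⟨j, p⟩
    dsimp only
    split
    · next hpj =>
      have hApos : 0 < znorm (k j) := hz j
      have hBpos : 0 < znorm (k p) := hz p
      have hd : p + (j - p) = j := by omega
      have hBA8 : znorm (k p) * 8 ^ (j - p) ≤ znorm (k j) := by
        have := hgrow p (j - p)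
        rwa [hd] at this
      have h8ge1 : (1:ℝ) ≤ 8 ^ (j - p) := one_le_pow₀ (by norm_num)
      have hBA : znorm (k p) ≤ znorm (k j) := by nlinarith
      have hrd : 0 ≤ r ^ (j - p) := pow_nonneg hr0 _
      have hone : r ^ (j - p) * (8:ℝ) ^ (j - p) = 1 := by
        rw [hr, ← mul_pow]; norm_num
      have hBt : znorm (k p) ≤ r ^ (j - p) * znorm (k j) := by
        have hmul := mul_le_mul_of_nonneg_left hBA8 hrd
        calc znorm (k p) = (r ^ (j - p) * 8 ^ (j - p)) * znorm (k p) := by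
              rw [hone, one_mul]
          _ = r ^ (j - p) * (znorm (k p) * 8 ^ (j - p)) := by ring
          _ ≤ r ^ (j - p) * znorm (k j) := hmul
      have key := interaction_bound hApos hBpos (hρ j) (hρ p) hN hrd hBA hBt
      calc ρ j * ρ p * znorm (k j) * znorm (k p)
            * (znorm (k j) + znorm (k p)) ^ (-2 * N - 2)
          ≤ (ρ j ^ 2 * znorm (k j) ^ (-2 * N) + ρ p ^ 2 * znorm (k p) ^ (-2 * N))
              * r ^ (j - p) := key
        _ = a j * r ^ (j - p) + a p * r ^ (j - p) := by
            rw [ha]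
            ring
    · next h =>
      simp [h]
end
end
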